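/- arXiv:1607.08674 — 5 statements merged into one kernel-verified Lean document; each statement's English description precedes it below -/
import Mathlib

section
/- For any sequence x in ℝ∪{-∞} indexed by ℕ, and any r ≥ 1, the (r+1)-th order extremal sequence satisfies the recursion x_n^{(r+1)} = ⋁_{j=r+1}^n ( x_{j-1}^{(r)} ∧ x_j ) for all n ≥ r+1, where x_n^{(r)} denotes the r-th largest among x_1,…,x_n (defined to be -∞ when n < r). -/
/-- The `r`-th largest among `x 1, …, x n` (with multiplicity), defined to be `⊥ = -∞`
when `n < r`. -/
noncomputable def kthLargest (x : ℕ → EReal) (r n : ℕ) : EReal :=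
  if r ≤ n then
    (((List.range n).map (fun i => x (i + 1))).mergeSort (fun a b => decide (b ≤ a))).getD
      (r - 1) ⊥
  else ⊥

/-!
List the values `x 1, …, x n` in decreasing order. Passing from `n` to `n + 1` inserts
`x (n + 1)` into this sorted list, and inserting `a` turns the entry at position `k + 1` into
`old (k + 1) ⊔ (old k ⊓ a)`: it only changes if `a` lands at or above position `k + 1`, and then
it becomes `a` capped by the old entry at position `k`. Hence
`x_{n+1}^{(r+1)} = x_n^{(r+1)} ∨ (x_n^{(r)} ∧ x_{n+1})`, and unrolling this from `n ≤ r`, where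
`x_n^{(r+1)} = -∞`, gives the recursion.
-/

namespace List

variable {α : Type*} [LinearOrder α]

theorem mergeSort_append_singleton_ge (l : List α) (a : α) :
    (l ++ [a]).mergeSort (· ≥ ·) = (l.mergeSort (· ≥ ·)).orderedInsert (· ≥ ·) a := by
  refine Perm.eq_of_sortedGE sortedGE_mergeSort
    (((pairwise_mergeSort' _ l).orderedInsert a _).sortedGE) ?_
  calc (l ++ [a]).mergeSort (· ≥ ·) ~ l ++ [a] := mergeSort_perm _ _
    _ ~ a :: l := perm_append_singleton a l
    _ ~ a :: l.mergeSort (· ≥ ·) := ((mergeSort_perm l _).symm).cons a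
    _ ~ (l.mergeSort (· ≥ ·)).orderedInsert (· ≥ ·) a := (perm_orderedInsert _ a _).symm

variable [OrderBot α]

theorem Pairwise.getD_bot_antitone {l : List α} (hl : l.Pairwise (· ≥ ·)) :
    Antitone (l.getD · ⊥) := by
  intro i j hij
  show l.getD j ⊥ ≤ l.getD i ⊥
  rcases lt_or_ge j l.length with hj | hj
  · rw [getD_eq_getElem _ _ hj, getD_eq_getElem _ _ (hij.trans_lt hj)]
    exact hl.sortedGE.getElem_ge_getElem_of_le hij
  · rw [getD_eq_default _ _ hj]
    exact bot_le

theorem getD_zero_orderedInsert_ge (l : List α) (a : α) :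
    (l.orderedInsert (· ≥ ·) a).getD 0 ⊥ = l.getD 0 ⊥ ⊔ a := by
  cases l with
  | nil => simp
  | cons b t => by_cases hba : b ≤ a <;> simp [hba, le_of_not_ge]

theorem Pairwise.getD_succ_orderedInsert_ge {l : List α} (hl : l.Pairwise (· ≥ ·)) (a : α)
    (k : ℕ) :
    (l.orderedInsert (· ≥ ·) a).getD (k + 1) ⊥ =
      l.getD (k + 1) ⊥ ⊔ (l.getD k ⊥ ⊓ a) := by
  induction l generalizing k with
  | nil => simp
  | cons b t ih =>
    by_cases hba : b ≤ a
    · have hka : (b :: t).getD k ⊥ ≤ a := (hl.getD_bot_antitone k.zero_le).trans hba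
      rw [orderedInsert_cons_of_le (· ≥ ·) t hba, getD_cons_succ, inf_eq_left.mpr hka,
        sup_eq_right.mpr (hl.getD_bot_antitone k.le_succ)]
    · rw [orderedInsert_of_not_le (· ≥ ·) t hba]
      cases k with
      | zero =>
        rw [zero_add, getD_cons_succ, getD_cons_succ, getD_cons_zero, getD_zero_orderedInsert_ge,
          inf_eq_right.mpr (le_of_not_ge hba)]
      | succ k =>
        simp only [getD_cons_succ]
        exact ih hl.of_cons k

end List

section

open List

noncomputable def descSortedPrefix (x : ℕ → EReal) (n : ℕ) : List EReal :=
  ((range n).map (fun i => x (i + 1))).mergeSort (· ≥ ·)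

theorem kthLargest_succ_eq_getD (x : ℕ → EReal) (k n : ℕ) :
    kthLargest x (k + 1) n = (descSortedPrefix x n).getD k ⊥ := by
  unfold kthLargest descSortedPrefix
  split_ifs with hkn
  · rfl
  · rw [getD_eq_default]
    simp only [length_mergeSort, length_map, length_range]
    omega

theorem descSortedPrefix_succ (x : ℕ → EReal) (n : ℕ) :
    descSortedPrefix x (n + 1) = (descSortedPrefix x n).orderedInsert (· ≥ ·) (x (n + 1)) := by
  rw [descSortedPrefix, range_succ, map_append, map_singleton, mergeSort_append_singleton_ge]
  rfl

theorem kthLargest_succ_succ (x : ℕ → EReal) (k n : ℕ) :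
    kthLargest x (k + 2) (n + 1) =
      kthLargest x (k + 2) n ⊔ (kthLargest x (k + 1) n ⊓ x (n + 1)) := by
  simp only [kthLargest_succ_eq_getD, descSortedPrefix_succ]
  exact (pairwise_mergeSort' _ _).getD_succ_orderedInsert_ge _ k

theorem kthLargest_of_lt (x : ℕ → EReal) {r n : ℕ} (h : n < r) : kthLargest x r n = ⊥ :=
  if_neg h.not_ge

end

theorem extremal_recursion_general (x : ℕ → EReal) (r : ℕ) (hr : 1 ≤ r) (n : ℕ) :
    kthLargest x (r + 1) n =
      (Finset.Icc (r + 1) n).sup (fun j => kthLargest x r (j - 1) ⊓ x j) := by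
  obtain ⟨k, rfl⟩ := Nat.exists_eq_add_of_le' hr
  induction n with
  | zero => simp [kthLargest_of_lt]
  | succ n ih =>
    rcases lt_or_ge n (k + 1) with hn | hn
    · rw [kthLargest_of_lt x (by omega), Finset.Icc_eq_empty (by omega), Finset.sup_empty]
    · rw [kthLargest_succ_succ, ih, ← Finset.insert_Icc_right_eq_Icc_add_one (by omega),
        Finset.sup_insert, sup_comm, Nat.add_sub_cancel]

/-- The recursion `x_n^{(r+1)} = ⋁_{j=r+1}^n (x_{j-1}^{(r)} ∧ x_j)` for `n ≥ r+1`. -/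
theorem extremal_recursion (x : ℕ → EReal) (r : ℕ) (hr : 1 ≤ r) (n : ℕ) (hn : r + 1 ≤ n) :
    kthLargest x (r + 1) n =
      (Finset.Icc (r + 1) n).sup (fun j => kthLargest x r (j - 1) ⊓ x j) :=
  extremal_recursion_general x r hr n
end

section
/- If X_1, X_2, … are i.i.d. random variables with a continuous distribution function, then the relative ranks R_n := #{ j ≤ n : X_j ≥ X_n } are independent random variables, and R_n is uniformly distributed on {1, 2, …, n}, i.e. P[R_n = i] = 1/n for i = 1,…,n. -/
/-!
Fix `N`. Almost surely `X₁, …, X_N` are distinct, and then their order pattern is a permutation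
`ρ` of `Fin N`; by exchangeability all `N!` patterns are equally likely. The ranks `R₁, …, R_N`
are the prefix ranks of the pattern, and `ρ ↦ prefixRank ρ` maps the permutations bijectively onto
`∏_{n ≤ N} {1, …, n}`: the prefix ranks determine the pattern, and both sides have `N!` elements.
Hence `(R₁, …, R_N)` is uniform on this product, i.e. its law is the product of the uniform laws
on `{1, …, n}`.
-/

open MeasureTheory ProbabilityTheory
open scoped ENNReal

open Classical in
/-- The relative rank `R_n = #{j ∈ {1,…,n} : X_j ≥ X_n}` of `X_n` among `X_1,…,X_n`. -/
noncomputable def relRank {Ω : Type*} (X : ℕ → Ω → ℝ) (n : ℕ) (ω : Ω) : ℕ :=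
  ((Finset.Icc 1 n).filter (fun j => X n ω ≤ X j ω)).card

open Finset Function

section OrderPattern

variable {ι κ α β γ : Type*} [LinearOrder α] [LinearOrder β] [LinearOrder γ]

def SameOrder (x : ι → α) (y : ι → β) : Prop := ∀ i j, x i < x j ↔ y i < y j

namespace SameOrder

variable {x : ι → α} {y : ι → β} {z : ι → γ}

theorem symm (h : SameOrder x y) : SameOrder y x := fun i j => (h i j).symm

theorem trans (h : SameOrder x y) (h' : SameOrder y z) : SameOrder x z :=
  fun i j => (h i j).trans (h' i j)

theorem le_iff_le (h : SameOrder x y) (i j : ι) : x i ≤ x j ↔ y i ≤ y j := by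
  simpa only [not_lt] using (h j i).not

theorem comp (h : SameOrder x y) (σ : κ → ι) : SameOrder (x ∘ σ) (y ∘ σ) :=
  fun i j => h (σ i) (σ j)

end SameOrder

theorem sameOrder_comp_equiv_iff {x : ι → α} {y : ι → β} (σ : κ ≃ ι) :
    SameOrder (x ∘ σ) (y ∘ σ) ↔ SameOrder x y :=
  ⟨fun h => by simpa [comp_assoc] using h.comp σ.symm, fun h => h.comp σ⟩

theorem Function.Injective.lt_iff_not_lt {x : ι → α} (hx : Injective x) {i j : ι}
    (hij : i ≠ j) : x i < x j ↔ ¬ x j < x i :=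
  ⟨lt_asymm, fun h => lt_of_le_of_ne (not_lt.1 h) (hx.ne hij)⟩

theorem Equiv.Perm.eq_of_sameOrder {N : ℕ} {ρ τ : Equiv.Perm (Fin N)} (h : SameOrder ρ τ) :
    ρ = τ := by
  have hmono : StrictMono (τ ∘ ρ.symm) := fun a b hab => (h _ _).1 (by simpa using hab)
  exact Equiv.ext fun i => by simpa using (congrFun hmono.eq_id (ρ i)).symm

theorem exists_sameOrder_perm {N : ℕ} {x : Fin N → α} (hx : Injective x) :
    ∃ ρ : Equiv.Perm (Fin N), SameOrder x ρ := by
  have hmono : StrictMono (x ∘ Tuple.sort x) :=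
    (Tuple.monotone_sort x).strictMono_of_injective (hx.comp (Tuple.sort x).injective)
  refine ⟨(Tuple.sort x).symm, fun i j => ?_⟩
  simpa using (hmono.lt_iff_lt (a := (Tuple.sort x).symm i) (b := (Tuple.sort x).symm j))

theorem sameOrder_id_iff_strictMono [LinearOrder ι] {x : ι → α} :
    SameOrder x id ↔ StrictMono x :=
  ⟨fun h _ _ hij => (h _ _).2 hij, fun h _ _ => h.lt_iff_lt⟩

end OrderPattern

section PrefixRank

variable {α β : Type*} [LinearOrder α] [LinearOrder β] {N : ℕ}

def prefixRank (x : Fin N → α) (n : Fin N) : ℕ := #{i ∈ Iic n | x n ≤ x i}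

variable (N) in
def rankVectors : Finset (Fin N → ℕ) := Fintype.piFinset fun n => Icc 1 (n + 1 : ℕ)

theorem SameOrder.prefixRank_eq {x : Fin N → α} {y : Fin N → β} (h : SameOrder x y) :
    prefixRank x = prefixRank y := by
  funext n
  simp only [prefixRank, h.le_iff_le]

theorem prefixRank_add_card_lt (x : Fin N → α) (n : Fin N) :
    prefixRank x n + #{i ∈ Iic n | x i < x n} = n + 1 := by
  simp only [prefixRank, ← not_le, card_filter_add_card_filter_not, Fin.card_Iic]

theorem prefixRank_mem_rankVectors (x : Fin N → α) : prefixRank x ∈ rankVectors N := by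
  refine Fintype.mem_piFinset.2 fun n => mem_Icc.2 ⟨card_pos.2 ⟨n, by simp⟩, ?_⟩
  have := prefixRank_add_card_lt x n
  omega

theorem mem_filter_Iic_lt_iff {z : Fin N → α} {n i : Fin N} :
    i ∈ ({i ∈ Iic n | z i < z n} : Finset _) ↔ i < n ∧ z i < z n := by
  simp only [mem_filter, mem_Iic]
  exact ⟨fun ⟨hi, hz⟩ => ⟨hi.lt_of_ne (by rintro rfl; exact lt_irrefl _ hz), hz⟩,
    fun ⟨hi, hz⟩ => ⟨hi.le, hz⟩⟩

theorem sameOrder_of_prefixRank_eq {x : Fin N → α} {y : Fin N → β} (hx : Injective x)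
    (hy : Injective y) (h : prefixRank x = prefixRank y) : SameOrder x y := by
  suffices key : ∀ n j, j < n → (x j < x n ↔ y j < y n) by
    intro i j
    rcases lt_trichotomy i j with hij | rfl | hij
    · exact key j i hij
    · simp
    · rw [hx.lt_iff_not_lt hij.ne', hy.lt_iff_not_lt hij.ne', key i j hij]
  intro n
  induction n using WellFoundedLT.induction with
  | _ n ih =>
  have hcard : #{i ∈ Iic n | x i < x n} = #{i ∈ Iic n | y i < y n} := by
    have hx' := prefixRank_add_card_lt x n
    have hy' := prefixRank_add_card_lt y n
    rw [h] at hx'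
    omega
  have below : ∀ j k, j < n → k < n → x j < x k → y j < y k := by
    intro j k hj hk hxjk
    rcases lt_trichotomy j k with hjk | rfl | hjk
    · exact (ih k hk j hjk).1 hxjk
    · exact absurd hxjk (lt_irrefl _)
    · rw [hy.lt_iff_not_lt hjk.ne', ← ih j hj k hjk]
      exact lt_asymm hxjk
  -- Both sets are initial segments of the positions before `n`, ordered by `x` resp. `y`. These
  -- orders agree (`below`) and the segments have the same size (`hcard`), so they coincide.
  have hAB : {i ∈ Iic n | x i < x n} = {i ∈ Iic n | y i < y n} := by
    by_contra hne
    obtain ⟨j, hjA, hjB⟩ :=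
      not_subset.1 fun hsub => hne (eq_of_subset_of_card_le hsub hcard.ge)
    obtain ⟨k, hkB, hkA⟩ :=
      not_subset.1 fun hsub => hne (eq_of_subset_of_card_le hsub hcard.le).symm
    rw [mem_filter_Iic_lt_iff] at hjA hjB hkA hkB
    have hxjk : x j < x k := hjA.2.trans_le (not_lt.1 fun h => hkA ⟨hkB.1, h⟩)
    exact hjB ⟨hjA.1, (below j k hjA.1 hkB.1 hxjk).trans hkB.2⟩
  intro j hj
  simpa only [mem_filter_Iic_lt_iff, hj, true_and] using Finset.ext_iff.1 hAB j

theorem card_rankVectors : #(rankVectors N) = N.factorial := by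
  simp [rankVectors, Fintype.card_piFinset, Fin.prod_univ_eq_prod_range (· + 1),
    prod_range_add_one_eq_factorial]

theorem prefixRank_injective_perm : Injective fun ρ : Equiv.Perm (Fin N) => prefixRank ρ :=
  fun ρ τ h => Equiv.Perm.eq_of_sameOrder (sameOrder_of_prefixRank_eq ρ.injective τ.injective h)

theorem image_prefixRank_perm :
    univ.image (fun ρ : Equiv.Perm (Fin N) => prefixRank ρ) = rankVectors N := by
  refine eq_of_subset_of_card_le (image_subset_iff.2 fun ρ _ => prefixRank_mem_rankVectors ρ) ?_
  rw [card_image_of_injective _ prefixRank_injective_perm, card_univ, Fintype.card_perm,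
    Fintype.card_fin, card_rankVectors]

end PrefixRank

theorem MeasureTheory.Measure.prod_diagonal_eq_zero {α : Type*} [MeasurableSpace α]
    [MeasurableEq α] (ν μ : Measure α) [SFinite μ] [NullSingletonClass μ] :
    (ν.prod μ) (Set.diagonal α) = 0 := by
  rw [Measure.prod_apply measurableSet_diagonal]
  simp [Set.diagonal]

theorem Finset.measurable_card_filter {ι Ω : Type*} [MeasurableSpace Ω] (s : Finset ι)
    {p : ι → Ω → Prop} [∀ i ω, Decidable (p i ω)] (hp : ∀ i, MeasurableSet {ω | p i ω}) :
    Measurable fun ω => #{i ∈ s | p i ω} := by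
  simp_rw [card_filter]
  exact Finset.measurable_sum _ fun i _ => Measurable.ite (hp i) measurable_const measurable_const

theorem uniformOn_pi_finset {ι Ω : Type*} [Fintype ι] [MeasurableSpace Ω]
    [MeasurableSingletonClass Ω] (s : ι → Finset Ω) :
    uniformOn (Set.univ.pi fun i => (s i : Set Ω)) =
      Measure.pi fun i => uniformOn (s i : Set Ω) := by
  classical
  refine (Measure.pi_eq fun t ht => ?_).symm
  have hinter : ∀ i, (s i : Set Ω) ∩ t i = ((s i).filter (· ∈ t i) : Finset Ω) := by
    intro i
    ext
    simp
  have hfactor : ∀ i, uniformOn (s i : Set Ω) (t i) =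
      uniformOn (s i : Set Ω) ((s i).filter (· ∈ t i) : Finset Ω) := by
    intro i
    rw [← hinter, uniformOn_inter_self (s i).finite_toSet]
  have hpi : uniformOn (Set.univ.pi fun i => (s i : Set Ω)) (Set.univ.pi t) =
      uniformOn (Fintype.piFinset s : Set (ι → Ω))
        (Fintype.piFinset fun i => (s i).filter (· ∈ t i) : Finset (ι → Ω)) := by
    rw [Fintype.coe_piFinset, Fintype.coe_piFinset, ← uniformOn_inter_self
      (Set.Finite.pi fun i => (s i).finite_toSet), ← Set.pi_inter_distrib]
    simp_rw [hinter]
  simp_rw [hpi, hfactor, uniformOn_apply_finset, ← Fintype.piFinset_inter, Fintype.card_piFinset]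
  push_cast
  exact (ENNReal.prod_div_distrib_of_ne_top fun i _ => ENNReal.natCast_ne_top _).symm

section Independence

variable {Ω β : Type*} [MeasurableSpace Ω] [MeasurableSpace β] {P : Measure Ω}

theorem iIndepFun_of_forall_fin {f : ℕ → Ω → β} (h : ∀ N, iIndepFun (fun i : Fin N => f i) P) :
    iIndepFun f P := by
  refine iIndepFun_iff_finset.2 fun s => ?_
  obtain ⟨N, hN⟩ : ∃ N, ∀ i ∈ s, i < N :=
    ⟨s.sup id + 1, fun i hi => Nat.lt_succ_of_le (le_sup (f := id) hi)⟩
  exact (h N).precomp (g := fun i : s => ⟨i, hN i i.2⟩) fun a b hab =>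
    Subtype.ext (congrArg Fin.val hab)

theorem iIndepFun_of_iIndepFun_succ [IsProbabilityMeasure P] {f : ℕ → Ω → β} (c : β)
    (h0 : ∀ ω, f 0 ω = c) (h : iIndepFun (fun n => f (n + 1)) P) : iIndepFun f P := by
  classical
  rw [iIndepFun_iff_measure_inter_preimage_eq_mul] at h ⊢
  intro S sets hS
  have avoid_zero : ∀ T ⊆ S, 0 ∉ T →
      P (⋂ i ∈ T, f i ⁻¹' sets i) = ∏ i ∈ T, P (f i ⁻¹' sets i) := by
    intro T hTS hT
    have hT' : T = (T.preimage Nat.succ Nat.succ_injective.injOn).image Nat.succ := by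
      rw [image_preimage, filter_true_of_mem fun i hi => ?_]
      obtain ⟨k, rfl⟩ := Nat.exists_eq_succ_of_ne_zero (ne_of_mem_of_not_mem hi hT)
      exact ⟨k, rfl⟩
    rw [hT', set_biInter_finset_image, prod_image Nat.succ_injective.injOn]
    exact h _ fun i hi => hS _ (hTS (mem_preimage.1 hi))
  by_cases h0S : 0 ∈ S
  · rw [← insert_erase h0S, set_biInter_insert, prod_insert (notMem_erase 0 S)]
    by_cases hc : c ∈ sets 0
    · have huniv : f 0 ⁻¹' sets 0 = Set.univ :=
        Set.eq_univ_of_forall fun ω => by simp [h0, hc]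
      rw [huniv, Set.univ_inter, measure_univ, one_mul]
      exact avoid_zero _ (erase_subset _ _) (notMem_erase 0 S)
    · have hempty : f 0 ⁻¹' sets 0 = ∅ :=
        Set.eq_empty_of_forall_notMem fun ω => by simp [h0, hc]
      simp [hempty]
  · exact avoid_zero S subset_rfl h0S

end Independence

section Exchangeability

variable {N : ℕ} {μ : Measure ℝ} [IsProbabilityMeasure μ]

theorem measurable_prefixRank : Measurable (prefixRank : (Fin N → ℝ) → Fin N → ℕ) :=
  measurable_pi_lambda _ fun n =>
    measurable_card_filter _ fun i =>
      measurableSet_le (measurable_pi_apply n) (measurable_pi_apply i)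

theorem measurableSet_setOf_sameOrder {β : Type*} [LinearOrder β] (y : Fin N → β) :
    MeasurableSet {x : Fin N → ℝ | SameOrder x y} := by
  unfold SameOrder
  measurability

theorem pi_setOf_eq_eq_zero [NullSingletonClass μ] {a b : Fin N} (hab : a ≠ b) :
    Measure.pi (fun _ => μ) {x | x a = x b} = 0 := by
  have hind := (iIndepFun_pi (μ := fun _ : Fin N => μ) (X := fun _ x => x)
    fun _ => aemeasurable_id).indepFun hab
  rw [indepFun_iff_map_prod_eq_prod_map_map (measurable_pi_apply a).aemeasurable
    (measurable_pi_apply b).aemeasurable] at hind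
  change Measure.pi _ ((fun x : Fin N → ℝ => (x a, x b)) ⁻¹' Set.diagonal ℝ) = 0
  rw [← Measure.map_apply (by fun_prop) measurableSet_diagonal, hind,
    (measurePreserving_eval _ b).map_eq]
  exact Measure.prod_diagonal_eq_zero _ _

theorem ae_injective_pi [NullSingletonClass μ] :
    ∀ᵐ x ∂Measure.pi fun _ : Fin N => μ, Injective x := by
  have hne : ∀ᵐ x ∂Measure.pi fun _ : Fin N => μ, ∀ a b, a ≠ b → x a ≠ x b := by
    refine ae_all_iff.2 fun a => ae_all_iff.2 fun b => ?_
    by_cases hab : a = b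
    · exact Filter.Eventually.of_forall fun _ h => absurd hab h
    · exact (measure_eq_zero_iff_ae_notMem.1 (pi_setOf_eq_eq_zero hab)).mono fun _ hx _ => hx
  filter_upwards [hne] with x hx a b hxab
  exact not_not.1 fun hab => hx a b hab hxab

theorem pi_setOf_sameOrder_eq_strictMono (ρ : Equiv.Perm (Fin N)) :
    Measure.pi (fun _ => μ) {x | SameOrder x ρ} =
      Measure.pi (fun _ => μ) {x : Fin N → ℝ | StrictMono x} := by
  have hpre : {x : Fin N → ℝ | SameOrder x ρ} =
      (· ∘ ρ.symm) ⁻¹' {x : Fin N → ℝ | StrictMono x} := by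
    ext x
    simp only [Set.mem_ofPred_eq, Set.mem_preimage, ← sameOrder_id_iff_strictMono,
      ← sameOrder_comp_equiv_iff ρ.symm (x := x) (y := ρ), Equiv.self_comp_symm]
  have hmp : MeasurePreserving (· ∘ ρ.symm) (Measure.pi fun _ : Fin N => μ)
      (Measure.pi fun _ => μ) := by
    convert measurePreserving_piCongrLeft (fun _ => μ) ρ using 1
    ext x i
    simp [MeasurableEquiv.piCongrLeft, Equiv.piCongrLeft]
  rw [hpre, hmp.measure_preimage]
  simpa only [sameOrder_id_iff_strictMono] using
    (measurableSet_setOf_sameOrder (id : Fin N → Fin N)).nullMeasurableSet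

theorem pi_eq_sum_inter_sameOrder [NullSingletonClass μ] {F : Set (Fin N → ℝ)}
    (hF : MeasurableSet F) :
    Measure.pi (fun _ => μ) F =
      ∑ ρ : Equiv.Perm (Fin N), Measure.pi (fun _ => μ) (F ∩ {x | SameOrder x ρ}) := by
  have hcover : Measure.pi (fun _ => μ) (⋃ ρ : Equiv.Perm (Fin N), {x | SameOrder x ρ})ᶜ = 0 :=
    ae_iff.1 <| ae_injective_pi.mono fun x hx => Set.mem_iUnion.2 (exists_sameOrder_perm hx)
  rw [← measure_inter_conull hcover, Set.inter_iUnion, measure_iUnion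
    (fun ρ τ hne => Set.disjoint_left.2 fun x hρ hτ =>
      hne (Equiv.Perm.eq_of_sameOrder (hρ.2.symm.trans hτ.2)))
    fun ρ => hF.inter (measurableSet_setOf_sameOrder ρ), tsum_fintype]

theorem pi_setOf_sameOrder_eq_inv_factorial [NullSingletonClass μ] (ρ : Equiv.Perm (Fin N)) :
    Measure.pi (fun _ => μ) {x | SameOrder x ρ} = (N.factorial : ℝ≥0∞)⁻¹ := by
  have h := pi_eq_sum_inter_sameOrder (μ := μ) (N := N) MeasurableSet.univ
  simp only [Set.univ_inter, pi_setOf_sameOrder_eq_strictMono, measure_univ, sum_const, card_univ,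
    Fintype.card_perm, Fintype.card_fin, nsmul_eq_mul] at h
  rw [pi_setOf_sameOrder_eq_strictMono]
  exact ENNReal.eq_inv_of_mul_eq_one_left (by rw [mul_comm, ← h])

theorem map_prefixRank_pi_eq_uniformOn [NullSingletonClass μ] :
    (Measure.pi fun _ : Fin N => μ).map prefixRank =
      uniformOn (rankVectors N : Set (Fin N → ℕ)) := by
  classical
  ext A hA
  have hterm : ∀ ρ : Equiv.Perm (Fin N),
      Measure.pi (fun _ => μ) (prefixRank ⁻¹' A ∩ {x | SameOrder x ρ}) =
        if prefixRank ρ ∈ A then (N.factorial : ℝ≥0∞)⁻¹ else 0 := by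
    intro ρ
    split_ifs with hρ
    · rw [← pi_setOf_sameOrder_eq_inv_factorial (μ := μ) ρ,
        Set.inter_eq_right.2 fun x hx => by simpa [hx.prefixRank_eq]]
    · have hempty : prefixRank ⁻¹' A ∩ {x : Fin N → ℝ | SameOrder x ρ} = ∅ :=
        Set.eq_empty_of_forall_notMem fun x hx => hρ (hx.2.prefixRank_eq ▸ hx.1)
      rw [hempty, measure_empty]
  rw [Measure.map_apply measurable_prefixRank hA,
    pi_eq_sum_inter_sameOrder (measurable_prefixRank hA)]
  simp_rw [hterm]
  have hcount :
      #{ρ : Equiv.Perm (Fin N) | prefixRank ρ ∈ A} = #{v ∈ rankVectors N | v ∈ A} := by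
    rw [← image_prefixRank_perm, filter_image, card_image_of_injective _ prefixRank_injective_perm]
  have hrestrict : uniformOn (rankVectors N : Set (Fin N → ℕ)) A =
      uniformOn (rankVectors N : Set _) ((rankVectors N).filter (· ∈ A) : Set (Fin N → ℕ)) := by
    rw [← uniformOn_inter_self (rankVectors N).finite_toSet, coe_filter]
    rfl
  rw [sum_ite, sum_const_zero, add_zero, sum_const, nsmul_eq_mul, hrestrict,
    uniformOn_apply_finset, inter_eq_right.2 (filter_subset _ _), card_rankVectors, hcount,
    div_eq_mul_inv]

end Exchangeability

section RelativeRanks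

variable {Ω : Type*} {X : ℕ → Ω → ℝ}

theorem relRank_zero (X : ℕ → Ω → ℝ) (ω : Ω) : relRank X 0 ω = 0 := by
  simp [relRank]

theorem relRank_succ_eq_prefixRank {N : ℕ} (ω : Ω) (n : Fin N) :
    relRank X (n + 1) ω = prefixRank (fun i : Fin N => X (i + 1) ω) n := by
  symm
  refine card_bij (fun i _ => (i : ℕ) + 1) (fun i hi => ?_) (fun i _ j _ h => ?_) fun k hk => ?_
  · simp only [mem_filter, mem_Iic, mem_Icc] at hi ⊢
    exact ⟨⟨by omega, by simpa using hi.1⟩, hi.2⟩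
  · exact Fin.ext (by simpa using h)
  · simp only [mem_filter, mem_Icc] at hk
    refine ⟨⟨k - 1, by omega⟩, ?_, Nat.sub_add_cancel hk.1.1⟩
    simp only [mem_filter, mem_Iic, Fin.le_def, Nat.sub_add_cancel hk.1.1]
    exact ⟨by omega, hk.2⟩

variable [MeasurableSpace Ω] {P : Measure Ω} [IsProbabilityMeasure P] {μ : Measure ℝ}

theorem measurable_relRank (hmeas : ∀ i, Measurable (X i)) (n : ℕ) : Measurable (relRank X n) :=
  measurable_card_filter _ fun j => measurableSet_le (hmeas n) (hmeas j)

theorem map_relRank_fin (hmeas : ∀ i, Measurable (X i)) (hindep : iIndepFun X P)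
    (hid : ∀ i, P.map (X i) = μ) [NullSingletonClass μ] (N : ℕ) :
    P.map (fun ω (n : Fin N) => relRank X (n + 1) ω) =
      Measure.pi fun n : Fin N => uniformOn (Icc 1 (n + 1 : ℕ) : Set ℕ) := by
  have : IsProbabilityMeasure μ :=
    hid 0 ▸ Measure.isProbabilityMeasure_map (hmeas 0).aemeasurable
  have hvec : P.map (fun ω (i : Fin N) => X (i + 1) ω) = Measure.pi fun _ => μ := by
    have hsucc : iIndepFun (fun i : Fin N => X (i + 1)) P :=
      hindep.precomp fun a b h => Fin.ext (by simpa using h)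
    rw [hsucc.map_fun_eq_pi_map fun i => (hmeas _).aemeasurable]
    simp [hid]
  have hcomp : (fun ω (n : Fin N) => relRank X (n + 1) ω) =
      prefixRank ∘ fun ω (i : Fin N) => X (i + 1) ω :=
    funext fun ω => funext (relRank_succ_eq_prefixRank ω)
  rw [hcomp, ← Measure.map_map measurable_prefixRank (measurable_pi_lambda _ fun i => hmeas _),
    hvec, map_prefixRank_pi_eq_uniformOn, rankVectors, Fintype.coe_piFinset, uniformOn_pi_finset]

theorem map_relRank (hmeas : ∀ i, Measurable (X i)) (hindep : iIndepFun X P)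
    (hid : ∀ i, P.map (X i) = μ) [NullSingletonClass μ] {n : ℕ} (hn : 1 ≤ n) :
    P.map (relRank X n) = uniformOn (Icc 1 n : Set ℕ) := by
  obtain ⟨k, rfl⟩ := Nat.exists_eq_add_of_le' hn
  have : ∀ i : Fin (k + 1), IsProbabilityMeasure (uniformOn (Icc 1 (i + 1 : ℕ) : Set ℕ)) :=
    fun i => isProbabilityMeasure_uniformOn (finite_toSet _) ⟨1, by simp⟩
  have h := congrArg (Measure.map (eval (Fin.last k))) (map_relRank_fin hmeas hindep hid (k + 1))
  rw [Measure.map_map (measurable_pi_apply _)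
    (measurable_pi_lambda _ fun i => measurable_relRank hmeas _),
    (measurePreserving_eval _ _).map_eq] at h
  simpa [comp_def] using h

theorem iIndepFun_relRank_fin (hmeas : ∀ i, Measurable (X i)) (hindep : iIndepFun X P)
    (hid : ∀ i, P.map (X i) = μ) [NullSingletonClass μ] (N : ℕ) :
    iIndepFun (fun n : Fin N => relRank X (n + 1)) P := by
  rw [iIndepFun_iff_map_fun_eq_pi_map fun n => (measurable_relRank hmeas _).aemeasurable,
    map_relRank_fin hmeas hindep hid]
  congr with n : 1
  rw [map_relRank hmeas hindep hid (by omega)]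

end RelativeRanks

/-- For i.i.d. random variables with continuous (atomless) common distribution, the relative
ranks `R_n` are independent, and `R_n` is uniform on `{1,…,n}`: `P[R_n = i] = 1/n`. -/
theorem relRank_iIndep_uniform {Ω : Type*} [MeasurableSpace Ω] (P : Measure Ω)
    [IsProbabilityMeasure P] (X : ℕ → Ω → ℝ) (hmeas : ∀ i, Measurable (X i))
    (hindep : iIndepFun X P)
    (μ : Measure ℝ) (hid : ∀ i, Measure.map (X i) P = μ)
    (hcont : ∀ y : ℝ, μ {y} = 0) :
    iIndepFun (fun n => relRank X n) P ∧
    ∀ n, 1 ≤ n → ∀ i, 1 ≤ i → i ≤ n → P {ω | relRank X n ω = i} = 1 / (n : ℝ≥0∞) := by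
  have : NullSingletonClass μ := ⟨hcont⟩
  refine ⟨iIndepFun_of_iIndepFun_succ 0 (relRank_zero X) <| iIndepFun_of_forall_fin fun N =>
    iIndepFun_relRank_fin hmeas hindep hid N, fun n hn i hi hin => ?_⟩
  change P (relRank X n ⁻¹' {i}) = _
  rw [← Measure.map_apply (measurable_relRank hmeas n) (measurableSet_singleton i),
    map_relRank hmeas hindep hid hn, ← coe_singleton, uniformOn_apply_finset]
  simp [hi, hin]
end

section
/- One-dimensional limit for the continuous-time r-th order extremal process: assume (r − Q(a(r)x+b(r)))/√r → h(x) for all x with h(x) ∈ ℝ. Then for each fixed t > 0, P[(Y^{(r)}(t) − b(r/t))/a(r/t) ≤ x] → Φ(√t · h(x)) as r → ∞, where Φ is the standard normal cdf. -/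
/-!
`Y^{(r)}(t) ≤ y` exactly when fewer than `r` points lie in `[0,t] × (y, x_r)`, so the probability
in question is the Poisson distribution function `P[N_m < r]` with mean `m = t Q(y)`, and the
left-tail condition says `(r - m) / √r → √t h`. By Poisson–Gamma duality
`P[N_m < r] = P[Γ_r > m] = 1 - ∫₀^m x^(r-1) e^(-x) / (r-1)! dx`, and after the substitution
`x = r + √r u` the Gamma density converges pointwise to the standard normal one (Stirling's formula
plus `log (1 + v) = v - v²/2 + O(v³)`). We integrate over `(0, m]` rather than `(m, ∞)` because
only the left tail has Gaussian decay: for `u ≤ M` the rescaled density is dominated by a multiple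
of `exp (-u² / 4)`, so dominated convergence gives `1 - Φ(-√t h) = Φ(√t h)`.
-/

open MeasureTheory ProbabilityTheory Filter Set Real
open scoped ENNReal NNReal Topology Nat

/-- The `Gamma(n + 1, 1)` density on `(0, ∞)`; for `x < 0` the formula is not the density. -/
noncomputable def erlangPDF (n : ℕ) (x : ℝ) : ℝ := exp (-x) * x ^ n / n !

theorem continuous_erlangPDF (n : ℕ) : Continuous (erlangPDF n) := by
  unfold erlangPDF; fun_prop

theorem hasDerivAt_sum_range_exp_neg_mul_pow_div_factorial (n : ℕ) (x : ℝ) :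
    HasDerivAt (fun y => ∑ k ∈ Finset.range (n + 1), exp (-y) * y ^ k / k !)
      (-erlangPDF n x) x := by
  induction n with
  | zero => simpa [erlangPDF] using (hasDerivAt_neg x).exp
  | succ n ih =>
    have hterm : HasDerivAt (fun y => exp (-y) * y ^ (n + 1) / (n + 1)!)
        (erlangPDF n x - erlangPDF (n + 1) x) x :=
      (((hasDerivAt_neg x).exp.mul (hasDerivAt_pow (n + 1) x)).div_const _).congr_deriv (by
        simp only [erlangPDF, Nat.factorial_succ, Nat.add_sub_cancel]
        push_cast
        field_simp
        ring)
    simp_rw [Finset.sum_range_succ _ (n + 1)]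
    exact (ih.add hterm).congr_deriv (by ring)

theorem integrableOn_erlangPDF (n : ℕ) : IntegrableOn (erlangPDF n) (Ioi 0) := by
  refine ((GammaIntegral_convergent (s := n + 1) (by positivity)).congr_fun (fun x _ => ?_)
    measurableSet_Ioi).div_const (n ! : ℝ)
  simp [rpow_natCast]

theorem integral_Ioi_erlangPDF (n : ℕ) {l : ℝ} (hl : 0 ≤ l) :
    ∫ x in Ioi l, erlangPDF n x = ∑ k ∈ Finset.range (n + 1), exp (-l) * l ^ k / k ! := by
  have hlim : Tendsto (fun y => -∑ k ∈ Finset.range (n + 1), exp (-y) * y ^ k / k !)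
      atTop (𝓝 0) := by
    simpa [mul_comm] using (tendsto_finsetSum _ fun k _ =>
      (tendsto_pow_mul_exp_neg_atTop_nhds_zero k).div_const (k ! : ℝ)).neg
  rw [integral_Ioi_of_hasDerivAt_of_tendsto' (fun x _ =>
      (hasDerivAt_sum_range_exp_neg_mul_pow_div_factorial n x).fun_neg.congr_deriv (neg_neg _))
    ((integrableOn_erlangPDF n).mono_set (Ioi_subset_Ioi hl)) hlim]
  simp

theorem poissonMeasure_real_Iio_eq_one_sub_integral (m : ℝ≥0) (n : ℕ) :
    (poissonMeasure m).real (Iio (n + 1)) = 1 - ∫ x in Ioc 0 (m : ℝ), erlangPDF n x := by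
  have htotal : ∫ x in Ioi 0, erlangPDF n x = 1 := by
    rw [integral_Ioi_erlangPDF n le_rfl, Finset.sum_eq_single 0 (fun k _ hk => by simp [hk])
      (by simp)]
    simp
  have hsplit := setIntegral_union (Ioc_disjoint_Ioi le_rfl) measurableSet_Ioi
    ((integrableOn_erlangPDF n).mono_set Ioc_subset_Ioi_self)
    ((integrableOn_erlangPDF n).mono_set (Ioi_subset_Ioi m.coe_nonneg))
  rw [Ioc_union_Ioi_eq_Ioi m.coe_nonneg, htotal, integral_Ioi_erlangPDF n m.coe_nonneg] at hsplit
  rw [← Finset.coe_range, ← sum_measureReal_singleton]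
  simp only [poissonMeasure_real_singleton]
  rw [eq_sub_iff_add_eq, add_comm]
  exact hsplit.symm

theorem tendsto_sqrt_natCast_atTop : Tendsto (fun r : ℕ => √(r : ℝ)) atTop atTop :=
  tendsto_sqrt_atTop.comp tendsto_natCast_atTop_atTop

theorem tendsto_sqrt_mul_pow_mul_exp_neg_div_factorial :
    Tendsto (fun r : ℕ => √r * r ^ r * exp (-r) / r !) atTop (𝓝 (√(2 * π))⁻¹) := by
  have hlim := (tendsto_const_nhds (x := √2).mul Stirling.tendsto_stirlingSeq_sqrt_pi).inv₀
    (by positivity)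
  rw [← sqrt_mul zero_le_two] at hlim
  refine hlim.congr fun r => ?_
  rw [Stirling.stirlingSeq, sqrt_mul zero_le_two, div_pow, exp_one_pow, exp_neg]
  field_simp

theorem log_one_add_le_sub_sq_div_two {v : ℝ} (h1 : -1 < v) (h2 : v ≤ 0) :
    log (1 + v) ≤ v - v ^ 2 / 2 := by
  have hv : 0 ≤ -v := by linarith
  have h := sum_le_hasSum (Finset.range 2) (fun n _ => by positivity)
    (hasSum_pow_div_log_of_abs_lt_one (x := -v) (by rw [abs_lt]; constructor <;> linarith))
  rw [Finset.sum_range_succ, Finset.sum_range_one, sub_neg_eq_add] at h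
  linarith

theorem abs_log_one_add_sub_add_sq_div_two_le {v : ℝ} (hv : |v| ≤ 1 / 2) :
    |log (1 + v) - v + v ^ 2 / 2| ≤ 2 * |v| ^ 3 := by
  have h := abs_log_sub_add_sum_range_le (x := -v) (by rw [abs_neg]; linarith) 2
  simp only [Finset.sum_range_succ, Finset.sum_range_zero, abs_neg, sub_neg_eq_add] at h
  calc |log (1 + v) - v + v ^ 2 / 2| ≤ |v| ^ 3 / (1 - |v|) := by
        convert h using 2; push_cast; ring
    _ ≤ |v| ^ 3 / (1 / 2) := by gcongr; linarith
    _ = 2 * |v| ^ 3 := by ring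

theorem tendsto_sub_one_mul_log_one_add_div_sqrt_sub_mul_sqrt (u : ℝ) :
    Tendsto (fun r : ℕ => (r - 1) * log (1 + u / √r) - u * √r) atTop (𝓝 (-(u ^ 2 / 2))) := by
  -- With `v = u / √r` the expression is `(r-1)(log (1+v) - v + v²/2) - (r-1) v²/2 - v`.
  set v : ℕ → ℝ := fun r => u / √r with hv_def
  have hv : Tendsto v atTop (𝓝 0) := tendsto_const_nhds.div_atTop tendsto_sqrt_natCast_atTop
  have hv_abs : Tendsto (fun r => |v r|) atTop (𝓝 0) := by simpa using hv.abs
  have hremainder : Tendsto (fun r : ℕ => (r - 1) * (log (1 + v r) - v r + v r ^ 2 / 2))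
      atTop (𝓝 0) := by
    refine squeeze_zero_norm' ?_
      ((tendsto_const_nhds (x := 2 * |u| ^ 3)).div_atTop tendsto_sqrt_natCast_atTop)
    filter_upwards [eventually_gt_atTop 0,
      hv_abs.eventually_le_const (by norm_num : (0 : ℝ) < 1 / 2)] with r hr hvr
    have hs : 0 < √(r : ℝ) := sqrt_pos.2 (by exact_mod_cast hr)
    have hr1 : (1 : ℝ) ≤ r := by exact_mod_cast hr
    calc ‖(r - 1) * (log (1 + v r) - v r + v r ^ 2 / 2)‖
        ≤ r * (2 * |v r| ^ 3) := by
          rw [norm_mul, Real.norm_of_nonneg (by linarith)]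
          exact mul_le_mul (by linarith) (abs_log_one_add_sub_add_sq_div_two_le hvr)
            (abs_nonneg _) (Nat.cast_nonneg r)
      _ = 2 * |u| ^ 3 / √r := by
          have hcube : √(r : ℝ) ^ 3 = r * √r := by rw [pow_succ, sq_sqrt (Nat.cast_nonneg r)]
          rw [hv_def, abs_div, abs_of_pos hs, div_pow, hcube]
          field_simp
  have hquadratic : Tendsto (fun r : ℕ => (r - 1) * v r ^ 2 / 2) atTop (𝓝 (u ^ 2 / 2)) := by
    have h := ((tendsto_const_nhds (x := (1 : ℝ))).sub
      tendsto_one_div_atTop_nhds_zero_nat).mul_const (u ^ 2 / 2)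
    rw [sub_zero, one_mul] at h
    refine h.congr' ?_
    filter_upwards [eventually_gt_atTop 0] with r hr
    rw [hv_def, div_pow, sq_sqrt (Nat.cast_nonneg r)]
    field_simp
  have h := (hremainder.sub hquadratic).sub hv
  rw [zero_sub, sub_zero] at h
  refine h.congr fun r => ?_
  have hrv : (r : ℝ) * v r = u * √r := by rw [hv_def, mul_div_left_comm, div_sqrt]
  linear_combination -hrv

theorem sqrt_mul_erlangPDF_eq {r : ℕ} (hr : 1 ≤ r) {u : ℝ} (hu : -√r < u) :
    √r * erlangPDF (r - 1) (√r * u + r) =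
      √r * r ^ r * exp (-r) / r ! * exp ((r - 1) * log (1 + u / √r) - u * √r) := by
  obtain ⟨n, rfl⟩ := Nat.exists_eq_add_of_le' hr
  set s := √((n + 1 : ℕ) : ℝ) with hs_def
  have hs : 0 < s := sqrt_pos.2 (by positivity)
  have hss : s * s = n + 1 := by rw [hs_def, mul_self_sqrt (by positivity)]; push_cast; ring
  have hw : 0 < 1 + u / s := by
    have : -1 < u / s := by rw [lt_div_iff₀ hs]; linarith
    linarith
  have hx : s * u + (n + 1 : ℕ) = (n + 1) * (1 + u / s) := by
    push_cast; rw [← hss]; field_simp; ring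
  have hus : u * s = (n + 1) * (u / s) := by rw [← hss]; field_simp
  have hpow : (1 + u / s) ^ n = exp (n * log (1 + u / s)) := by rw [exp_nat_mul, exp_log hw]
  rw [erlangPDF, Nat.add_sub_cancel, hx, mul_pow, hpow, hus, Nat.factorial_succ]
  push_cast
  rw [show (n + 1 : ℝ) - 1 = n by ring, sub_eq_add_neg, exp_add,
    show -((n + 1) * (1 + u / s)) = -(n + 1 : ℝ) + -((n + 1) * (u / s)) by ring, exp_add]
  field_simp
  ring

theorem sub_one_mul_log_one_add_div_sqrt_sub_mul_sqrt_le {r : ℕ} (hr : 2 ≤ r) {u M : ℝ}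
    (hu : -√r < u) (huM : u ≤ M) :
    (r - 1) * log (1 + u / √r) - u * √r ≤ 1 + M ^ 2 / 4 - u ^ 2 / 4 := by
  have hr2 : (2 : ℝ) ≤ r := by exact_mod_cast hr
  have hs : 0 < √(r : ℝ) := sqrt_pos.2 (by linarith)
  set v := u / √r with hv_def
  have hv : -1 < v := by rw [hv_def, lt_div_iff₀ hs]; linarith
  have hrv : u * √r = r * v := by rw [hv_def, mul_div_left_comm, div_sqrt, mul_comm]
  have hrv2 : u ^ 2 = r * v ^ 2 := by
    rw [hv_def, div_pow, sq_sqrt (by linarith)]; field_simp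
  rw [hrv]
  rcases le_or_gt v 0 with hv0 | hv0
  · have hlog := mul_le_mul_of_nonneg_left (log_one_add_le_sub_sq_div_two hv hv0)
      (by linarith : (0 : ℝ) ≤ r - 1)
    nlinarith [sq_nonneg v, sq_nonneg M]
  · have hlog := mul_le_mul_of_nonneg_left (log_le_sub_one_of_pos (by linarith : 0 < 1 + v))
      (by linarith : (0 : ℝ) ≤ r - 1)
    have huM2 : u ^ 2 ≤ M ^ 2 := by
      have : 0 < u := by rw [hv_def] at hv0; exact (div_pos_iff_of_pos_right hs).1 hv0
      nlinarith
    nlinarith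

theorem tendsto_sqrt_mul_erlangPDF (u : ℝ) :
    Tendsto (fun r : ℕ => √r * erlangPDF (r - 1) (√r * u + r)) atTop
      (𝓝 (gaussianPDFReal 0 1 u)) := by
  have hφ : gaussianPDFReal 0 1 u = (√(2 * π))⁻¹ * exp (-(u ^ 2 / 2)) := by
    simp [gaussianPDFReal, neg_div]
  rw [hφ]
  refine (tendsto_sqrt_mul_pow_mul_exp_neg_div_factorial.mul ((continuous_exp.tendsto _).comp
    (tendsto_sub_one_mul_log_one_add_div_sqrt_sub_mul_sqrt u))).congr' ?_
  filter_upwards [eventually_ge_atTop 1, tendsto_sqrt_natCast_atTop.eventually_gt_atTop (-u)]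
    with r hr hu
  exact (sqrt_mul_erlangPDF_eq hr (by linarith)).symm

theorem exists_norm_sqrt_mul_erlangPDF_le (M : ℝ) :
    ∃ K > 0, ∀ᶠ r : ℕ in atTop, ∀ u ∈ Ioc (-√r) M,
      ‖√r * erlangPDF (r - 1) (√r * u + r)‖ ≤ K * exp (-4⁻¹ * u ^ 2) := by
  refine ⟨((√(2 * π))⁻¹ + 1) * exp (1 + M ^ 2 / 4), by positivity, ?_⟩
  filter_upwards [eventually_ge_atTop 2,
    tendsto_sqrt_mul_pow_mul_exp_neg_div_factorial.eventually_le_const (lt_add_one _)]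
    with r hr hstirling u hu
  rw [sqrt_mul_erlangPDF_eq (by omega) hu.1, norm_of_nonneg (by positivity)]
  calc _ ≤ ((√(2 * π))⁻¹ + 1) * exp (1 + M ^ 2 / 4 - u ^ 2 / 4) :=
        mul_le_mul hstirling
          (exp_le_exp.2 (sub_one_mul_log_one_add_div_sqrt_sub_mul_sqrt_le hr hu.1 hu.2))
          (exp_pos _).le (by positivity)
    _ = _ := by rw [mul_assoc, ← exp_add]; ring_nf

theorem integral_Ioc_erlangPDF_eq {r m : ℝ} (hr : 0 < r) (hm : 0 ≤ m) (n : ℕ) :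
    ∫ x in Ioc 0 m, erlangPDF n x =
      ∫ u in Ioc (-√r) ((m - r) / √r), √r * erlangPDF n (√r * u + r) := by
  have hs : 0 < √r := sqrt_pos.2 hr
  have hss : √r * √r = r := mul_self_sqrt hr.le
  have hle : -√r ≤ (m - r) / √r := by rw [le_div_iff₀ hs]; nlinarith
  rw [← intervalIntegral.integral_of_le hm, ← intervalIntegral.integral_of_le hle,
    intervalIntegral.integral_const_mul, intervalIntegral.integral_comp_mul_add _ hs.ne',
    smul_eq_mul, ← mul_assoc, mul_inv_cancel₀ hs.ne', one_mul]
  congr 1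
  · rw [mul_neg, hss, neg_add_cancel]
  · field_simp; ring

theorem tendsto_integral_Ioc_sqrt_mul_erlangPDF {d : ℕ → ℝ} {D : ℝ}
    (hd : Tendsto d atTop (𝓝 D)) :
    Tendsto (fun r : ℕ => ∫ u in Ioc (-√r) (d r), √r * erlangPDF (r - 1) (√r * u + r)) atTop
      (𝓝 (∫ u in Iio D, gaussianPDFReal 0 1 u)) := by
  obtain ⟨K, hK0, hK⟩ := exists_norm_sqrt_mul_erlangPDF_le (D + 1)
  simp_rw [← integral_indicator measurableSet_Ioc, ← integral_indicator measurableSet_Iio]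
  refine tendsto_integral_filter_of_dominated_convergence (fun u => K * exp (-4⁻¹ * u ^ 2))
    (Eventually.of_forall fun r => ?_) ?_
    ((integrable_exp_neg_mul_sq (by norm_num)).const_mul K) ?_
  · exact ((continuous_const.mul ((continuous_erlangPDF _).comp (by fun_prop))).measurable
      |>.indicator measurableSet_Ioc).aestronglyMeasurable
  · filter_upwards [hK, hd.eventually_le_const (lt_add_one D)] with r hr hdr
    refine Eventually.of_forall fun u => ?_
    by_cases hu : u ∈ Ioc (-√r) (d r)
    · rw [indicator_of_mem hu]
      exact hr u ⟨hu.1, hu.2.trans hdr⟩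
    · rw [indicator_of_notMem hu, norm_zero]
      positivity
  · filter_upwards [volume.ae_ne D] with u hu
    rcases hu.lt_or_gt with hlt | hgt
    · rw [indicator_of_mem (show u ∈ Iio D from hlt)]
      refine (tendsto_sqrt_mul_erlangPDF u).congr' ?_
      filter_upwards [tendsto_sqrt_natCast_atTop.eventually_gt_atTop (-u),
        hd.eventually_const_lt hlt] with r h1 h2
      rw [indicator_of_mem (show u ∈ Ioc (-√r) (d r) from ⟨by linarith, h2.le⟩)]
    · rw [indicator_of_notMem (show u ∉ Iio D from not_lt.2 hgt.le)]
      refine tendsto_const_nhds.congr' ?_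
      filter_upwards [hd.eventually_lt_const hgt] with r hr
      rw [indicator_of_notMem (fun h => (lt_of_lt_of_le hr h.2).false)]

theorem gaussianReal_real_Iic_eq_one_sub_integral (C : ℝ) :
    (gaussianReal 0 1).real (Iic C) = 1 - ∫ u in Iio (-C), gaussianPDFReal 0 1 u := by
  have hsymm : (gaussianReal 0 1).real (Iic C) = (gaussianReal 0 1).real (Ici (-C)) := by
    conv_rhs => rw [← neg_zero, ← gaussianReal_map_neg]
    rw [map_measureReal_apply measurable_neg measurableSet_Ici]
    congr 1
    ext x
    simp
  rw [hsymm, ← compl_Iio, probReal_compl_eq_one_sub measurableSet_Iio, measureReal_def,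
    gaussianReal_apply_eq_integral _ one_ne_zero, ENNReal.toReal_ofReal
      (setIntegral_nonneg measurableSet_Iio fun u _ => gaussianPDFReal_nonneg _ _ _)]

theorem tendsto_poissonMeasure_real_Iio {m : ℕ → ℝ≥0} {C : ℝ}
    (hm : Tendsto (fun r : ℕ => (r - m r) / √r) atTop (𝓝 C)) :
    Tendsto (fun r : ℕ => (poissonMeasure (m r)).real (Iio r)) atTop
      (𝓝 ((gaussianReal 0 1).real (Iic C))) := by
  have hd : Tendsto (fun r : ℕ => ((m r : ℝ) - r) / √r) atTop (𝓝 (-C)) := by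
    refine hm.neg.congr fun r => ?_
    ring
  rw [gaussianReal_real_Iic_eq_one_sub_integral]
  refine ((tendsto_integral_Ioc_sqrt_mul_erlangPDF hd).const_sub 1).congr' ?_
  filter_upwards [eventually_gt_atTop 0] with r hr
  obtain ⟨n, rfl⟩ := Nat.exists_eq_add_of_lt hr
  rw [zero_add, poissonMeasure_real_Iio_eq_one_sub_integral,
    integral_Ioc_erlangPDF_eq (r := ((n + 1 : ℕ) : ℝ)) (by positivity) (m (n + 1)).coe_nonneg,
    Nat.add_sub_cancel]

theorem csInf_le_iff_of_antitoneOn {β : Type*} [Preorder β] {f : ℝ → β} {xl xr y : ℝ} {r : β}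
    (hf : AntitoneOn f (Ioo xl xr)) (hy : y ∈ Ioo xl xr)
    (hright : ∃ ε > 0, ∀ z ∈ Ico y (y + ε), f z = f y)
    (hne : {z | xl < z ∧ f z < r}.Nonempty) :
    sInf {z | xl < z ∧ f z < r} ≤ y ↔ f y < r := by
  refine ⟨fun hle => ?_, fun hfy => csInf_le ⟨xl, fun z hz => hz.1.le⟩ ⟨hy.1, hfy⟩⟩
  obtain ⟨ε, hε, hconst⟩ := hright
  obtain ⟨z, ⟨hz, hfz⟩, hzε⟩ := Real.lt_sInf_add_pos hne hε
  rcases le_or_gt z y with hzy | hyz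
  · exact (hf ⟨hz, hzy.trans_lt hy.2⟩ hy hzy).trans_lt hfz
  · rwa [← hconst z ⟨hyz.le, by linarith⟩]

theorem measureReal_lt_eq_poissonMeasure_real_Iio {Ω : Type*} [MeasurableSpace Ω]
    {P : Measure Ω} {X : Ω → ℕ} {m : ℝ≥0} (hX : P.map X = poissonMeasure m) (r : ℕ) :
    P.real {ω | X ω < r} = (poissonMeasure m).real (Iio r) := by
  have hXm : AEMeasurable X P :=
    .of_map_ne_zero (by rw [hX]; exact IsProbabilityMeasure.ne_zero _)
  rw [← hX, map_measureReal_apply_of_aemeasurable hXm measurableSet_Iio]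
  rfl

theorem tendsto_natCast_sub_mul_div_sqrt {g : ℝ → ℝ} {h t : ℝ} (ht : 0 < t)
    (hg : Tendsto (fun s => (s - g s) / √s) atTop (𝓝 h)) :
    Tendsto (fun r : ℕ => (r - t * g (r / t)) / √r) atTop (𝓝 (√t * h)) := by
  refine ((hg.comp (tendsto_natCast_atTop_atTop.atTop_div_const ht)).const_mul √t).congr' ?_
  filter_upwards [eventually_gt_atTop 0] with r hr
  have hr' : (0 : ℝ) < r := by exact_mod_cast hr
  have htt : √t * √t = t := mul_self_sqrt ht.le
  simp only [Function.comp_apply, sqrt_div hr'.le]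
  field_simp
  linear_combination (r - t * g (r / t)) * htt

/-- Here `c ω t y = N([0,t] × (y, x_r))(ω)` and `Y r t = Y^{(r)}(t)`. -/
theorem rth_extremal_process_normal_limit_general {Ω : Type*} [MeasurableSpace Ω] (P : Measure Ω)
    (xl xr : ℝ)
    (Q : ℝ → ℝ) (hQpos : ∀ y ∈ Ioo xl xr, 0 < Q y)
    (c : Ω → ℝ → ℝ → ℕ)
    (hanti : ∀ ω t, AntitoneOn (c ω t) (Ioo xl xr))
    (hrc : ∀ ω t, ∀ y ∈ Ioo xl xr, ∃ ε > 0, ∀ z ∈ Ico y (y + ε), c ω t z = c ω t y)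
    (hempty : ∀ ω, ∀ t > (0 : ℝ), ∃ y ∈ Ioo xl xr, c ω t y = 0)
    (hdist : ∀ t > (0 : ℝ), ∀ y ∈ Ioo xl xr,
      Measure.map (fun ω => c ω t y) P = poissonMeasure (t * Q y).toNNReal)
    (Y : ℕ → ℝ → Ω → ℝ)
    (hY : ∀ r t ω, Y r t ω = sInf {y | xl < y ∧ c ω t y < r})
    (a b : ℝ → ℝ) (ha : ∀ s, 0 < a s) (x h : ℝ)
    (hmem : ∀ s > (0 : ℝ), a s * x + b s ∈ Ioo xl xr)
    (hlim : Tendsto (fun s : ℝ => (s - Q (a s * x + b s)) / Real.sqrt s) atTop (𝓝 h))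
    (t : ℝ) (ht : 0 < t) :
    Tendsto
      (fun r : ℕ =>
        (P {ω | (Y r t ω - b ((r : ℝ) / t)) / a ((r : ℝ) / t) ≤ x}).toReal)
      atTop (𝓝 ((gaussianReal 0 1 (Iic (Real.sqrt t * h))).toReal)) := by
  set y : ℕ → ℝ := fun r => a (r / t) * x + b (r / t)
  have hy : ∀ r : ℕ, 0 < r → y r ∈ Ioo xl xr := fun r hr => hmem _ (by positivity)
  have hm : Tendsto (fun r : ℕ => (r - (t * Q (y r)).toNNReal) / √r) atTop (𝓝 (√t * h)) := by
    refine (tendsto_natCast_sub_mul_div_sqrt ht hlim).congr' ?_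
    filter_upwards [eventually_gt_atTop 0] with r hr
    rw [Real.coe_toNNReal _ (mul_pos ht (hQpos _ (hy r hr))).le]
  refine (tendsto_poissonMeasure_real_Iio hm).congr' ?_
  filter_upwards [eventually_gt_atTop 0] with r hr
  have hevent : {ω | (Y r t ω - b (r / t)) / a (r / t) ≤ x} = {ω | c ω t (y r) < r} := by
    ext ω
    obtain ⟨z, hz, hcz⟩ := hempty ω t ht
    rw [mem_ofPred_eq, mem_ofPred_eq, div_le_iff₀ (ha _), sub_le_iff_le_add, mul_comm, hY,
      csInf_le_iff_of_antitoneOn (hanti ω t) (hy r hr) (hrc ω t _ (hy r hr))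
        ⟨z, hz.1, by rw [hcz]; exact hr⟩]
  rw [← measureReal_def, hevent,
    measureReal_lt_eq_poissonMeasure_real_Iio (hdist t ht _ (hy r hr))]

/-- One-dimensional limit for the continuous-time `r`-th order extremal process
`Y^{(r)}(t) = inf{x > x_l : c(t,x) < r}`, where `c ω t x` counts the points of a Poisson random
measure (intensity `Leb × Π`, `Q(x) = Π(x,x_r)`) in `[0,t] × (x,x_r)`. Under the left-tail
condition `(s − Q(a(s)x + b(s)))/√s → h(x)`, for each fixed `t > 0`,
`P[(Y^{(r)}(t) − b(r/t))/a(r/t) ≤ x] → Φ(√t·h(x))` as `r → ∞`. -/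
theorem rth_extremal_process_normal_limit {Ω : Type*} [MeasurableSpace Ω] (P : Measure Ω)
    [IsProbabilityMeasure P] (xl xr : ℝ) (hlr : xl < xr)
    (Q : ℝ → ℝ) (hQpos : ∀ y ∈ Ioo xl xr, 0 < Q y)
    (c : Ω → ℝ → ℝ → ℕ)
    (hanti : ∀ ω t, AntitoneOn (c ω t) (Ioo xl xr))
    (hrc : ∀ ω t, ∀ y ∈ Ioo xl xr, ∃ ε > 0, ∀ z ∈ Ico y (y + ε), c ω t z = c ω t y)
    (hempty : ∀ ω, ∀ t > (0 : ℝ), ∃ y ∈ Ioo xl xr, c ω t y = 0)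
    (hdist : ∀ t > (0 : ℝ), ∀ y ∈ Ioo xl xr,
      Measure.map (fun ω => c ω t y) P = poissonMeasure (t * Q y).toNNReal)
    (Y : ℕ → ℝ → Ω → ℝ)
    (hY : ∀ r t ω, Y r t ω = sInf {y | xl < y ∧ c ω t y < r})
    (a b : ℝ → ℝ) (ha : ∀ s, 0 < a s) (x h : ℝ)
    (hmem : ∀ s > (0 : ℝ), a s * x + b s ∈ Ioo xl xr)
    (hlim : Tendsto (fun s : ℝ => (s - Q (a s * x + b s)) / Real.sqrt s) atTop (𝓝 h))
    (t : ℝ) (ht : 0 < t) :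
    Tendsto
      (fun r : ℕ =>
        (P {ω | (Y r t ω - b ((r : ℝ) / t)) / a ((r : ℝ) / t) ≤ x}).toReal)
      atTop (𝓝 ((gaussianReal 0 1 (Iic (Real.sqrt t * h))).toReal)) :=
  rth_extremal_process_normal_limit_general P xl xr Q hQpos c hanti hrc hempty hdist Y hY a b ha x h
    hmem hlim t ht
end

section
/- Convergence of the normalized minimum jointly with order statistics: under the condition r·F(a_r x − b_r) → g_γ(x) for all x with g_γ(x) > 0 (equivalently the domain of attraction condition for minima), for each fixed j ≥ 0, P[(M_{r+j}^{(r)} + b_r)/a_r ≤ x] → P[Γ_{j+1} ≤ g_γ(x)] = Σ-free closed form 1 − Σ_{k=0}^{j} e^{−g_γ(x)} g_γ(x)^k / k!, where Γ_{j+1} is a sum of j+1 i.i.d. standard exponentials. -/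
/-!
The `r`-th largest of `r + j` observations is `≤ t` exactly when at least `j + 1` of them are
`≤ t`. For `t = a_r x - b_r` that count is binomial with `r + j` trials and success probability
`p_r = F(a_r x - b_r)`, where `r p_r → g`; by the Poisson limit theorem its distribution function
at `j` tends to the Poisson one, `∑_{k ≤ j} e^{-g} g^k / k! = P[Γ_{j+1} > g]`.
-/

open MeasureTheory ProbabilityTheory Filter
open scoped ENNReal Topology

/-- The `r`-th largest among `x 1, …, x n` (with multiplicity), for `1 ≤ r ≤ n`. -/
noncomputable def kthLargestR (x : ℕ → ℝ) (r n : ℕ) : ℝ :=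
  (((List.range n).map (fun i => x (i + 1))).mergeSort (fun a b => decide (b ≤ a))).getD
    (r - 1) 0

open Finset

theorem List.Pairwise.getElem_le_iff_countP_le {α : Type*} [LinearOrder α] {l : List α}
    (hl : l.Pairwise (· ≥ ·)) {k : ℕ} (hk : k < l.length) (t : α) :
    l[k] ≤ t ↔ l.countP (t < ·) ≤ k := by
  induction l generalizing k with
  | nil => simp at hk
  | cons a l ih =>
    obtain ⟨ha, hl⟩ := List.pairwise_cons.1 hl
    have hzero (hat : a ≤ t) : l.countP (t < ·) = 0 :=
      List.countP_eq_zero.2 fun b hb => by simpa using (ha b hb).trans hat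
    rw [List.countP_cons]
    rcases k with _ | k
    · by_cases hat : a ≤ t <;> simp [hat, hzero]
    · by_cases hta : t < a
      · simp [hta, ih hl (Nat.lt_of_succ_lt_succ hk)]
      · rw [not_lt] at hta
        simp [not_lt.2 hta, hzero hta, (ha _ (List.getElem_mem _)).trans hta]

theorem kthLargestR_le_iff (x : ℕ → ℝ) {r n : ℕ} (hr : 1 ≤ r) (hrn : r ≤ n) (t : ℝ) :
    kthLargestR x r n ≤ t ↔ #{i ∈ range n | t < x (i + 1)} < r := by
  set l := ((List.range n).map (fun i => x (i + 1))).mergeSort (fun a b => decide (b ≤ a))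
  have hlen : l.length = n := by simp [l]
  have hsorted : l.Pairwise (· ≥ ·) := List.pairwise_mergeSort' _ _
  have hcount : l.countP (t < ·) = #{i ∈ range n | t < x (i + 1)} := by
    rw [(List.mergeSort_perm _ _).countP_eq, List.countP_map, List.countP_eq_length_filter]
    rfl
  rw [kthLargestR, List.getD_eq_getElem _ _ (by rw [hlen]; omega),
    hsorted.getElem_le_iff_countP_le, hcount]
  omega

theorem kthLargestR_add_le_iff (x : ℕ → ℝ) {r : ℕ} (hr : 1 ≤ r) (j : ℕ) (t : ℝ) :
    kthLargestR x r (r + j) ≤ t ↔ j + 1 ≤ #{i ∈ range (r + j) | x (i + 1) ≤ t} := by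
  have hsplit := card_filter_add_card_filter_not (s := range (r + j)) (p := fun i => t < x (i + 1))
  simp only [not_lt, card_range] at hsplit
  rw [kthLargestR_le_iff x hr (by omega)]
  omega

theorem ProbabilityTheory.iIndepFun.iIndepSet_preimage {Ω ι β : Type*} [MeasurableSpace Ω]
    [MeasurableSpace β] {μ : Measure Ω} {X : ι → Ω → β} (h : iIndepFun X μ)
    (hX : ∀ i, Measurable (X i)) {B : Set β} (hB : MeasurableSet B) :
    iIndepSet (fun i => X i ⁻¹' B) μ :=
  (iIndepSet_iff_meas_biInter fun i => hX i hB).2 fun _ =>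
    h.meas_biInter fun _ _ => ⟨B, hB, rfl⟩

section IndependentEvents

open scoped Classical

variable {Ω ι : Type*} {A : ι → Set Ω}

theorem setOf_filter_mem_eq_biInter (s : Finset ι) {T : Finset ι} (hT : T ⊆ s) :
    {ω | {i ∈ s | ω ∈ A i} = T} = ⋂ i ∈ s, if i ∈ T then A i else (A i)ᶜ := by
  ext ω
  simp only [Set.mem_ofPred_eq, Set.mem_iInter, Finset.ext_iff, mem_filter]
  constructor
  · intro h i hi
    split_ifs with hiT
    · exact ((h i).2 hiT).2
    · exact fun hiA => hiT ((h i).1 ⟨hi, hiA⟩)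
  · intro h i
    constructor
    · rintro ⟨hi, hiA⟩
      by_contra hiT
      simpa [hiT, hiA] using h i hi
    · intro hiT
      simpa [hiT, hT hiT] using h i (hT hiT)

variable [MeasurableSpace Ω]

theorem measurableSet_filter_mem_eq (hA : ∀ i, MeasurableSet (A i)) (s : Finset ι)
    {T : Finset ι} (hT : T ⊆ s) : MeasurableSet {ω | {i ∈ s | ω ∈ A i} = T} := by
  rw [setOf_filter_mem_eq_biInter s hT]
  refine Finset.measurableSet_biInter _ fun i _ => ?_
  split_ifs
  exacts [hA i, (hA i).compl]

theorem measurable_card_filter_mem (hA : ∀ i, MeasurableSet (A i)) (s : Finset ι) :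
    Measurable fun ω => #{i ∈ s | ω ∈ A i} := by
  simp_rw [card_filter]
  exact Finset.measurable_sum s fun i _ => Measurable.ite (hA i) measurable_const measurable_const

variable {P : Measure Ω} [IsProbabilityMeasure P] {p : ℝ}

theorem measureReal_filter_mem_eq (hA : ∀ i, MeasurableSet (A i)) (hind : iIndepSet A P)
    (hp : ∀ i, P.real (A i) = p) (s : Finset ι) {T : Finset ι} (hT : T ⊆ s) :
    P.real {ω | {i ∈ s | ω ∈ A i} = T} = p ^ #T * (1 - p) ^ (#s - #T) := by
  have hmeas : ∀ i ∈ s, MeasurableSet[MeasurableSpace.generateFrom {A i}]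
      (if i ∈ T then A i else (A i)ᶜ) := fun i _ => by
    have hAi := MeasurableSpace.measurableSet_generateFrom (Set.mem_singleton (A i))
    split_ifs
    exacts [hAi, hAi.compl]
  have hin : ∀ i ∈ T, P.real (if i ∈ T then A i else (A i)ᶜ) = p := fun i hi => by
    rw [if_pos hi, hp]
  have hout : ∀ i ∈ s \ T, P.real (if i ∈ T then A i else (A i)ᶜ) = 1 - p := fun i hi => by
    rw [if_neg (Finset.mem_sdiff.1 hi).2, probReal_compl_eq_one_sub (hA i), hp]
  rw [setOf_filter_mem_eq_biInter s hT, measureReal_def,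
    ((iIndepSet_iff_iIndep A P).1 hind).meas_biInter hmeas, ENNReal.toReal_prod]
  simp only [← measureReal_def]
  rw [← prod_sdiff hT, prod_congr rfl hin, prod_congr rfl hout, prod_const, prod_const,
    card_sdiff_of_subset hT, mul_comm]

theorem measureReal_card_filter_mem_eq (hA : ∀ i, MeasurableSet (A i)) (hind : iIndepSet A P)
    (hp : ∀ i, P.real (A i) = p) (s : Finset ι) (k : ℕ) :
    P.real {ω | #{i ∈ s | ω ∈ A i} = k} = (#s).choose k * p ^ k * (1 - p) ^ (#s - k) := by
  have hpre : {ω | #{i ∈ s | ω ∈ A i} = k}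
      = (fun ω => {i ∈ s | ω ∈ A i}) ⁻¹' ↑(powersetCard k s) := by
    ext ω
    simp
  rw [hpre, ← sum_measureReal_preimage_singleton _
    fun T hT => measurableSet_filter_mem_eq hA s (mem_powersetCard.1 hT).1]
  rw [sum_congr rfl fun T hT => ?_, sum_const, card_powersetCard, nsmul_eq_mul, mul_assoc]
  obtain ⟨hTs, rfl⟩ := mem_powersetCard.1 hT
  exact measureReal_filter_mem_eq hA hind hp s hTs

theorem measureReal_le_card_filter_mem (hA : ∀ i, MeasurableSet (A i)) (hind : iIndepSet A P)
    (hp : ∀ i, P.real (A i) = p) (s : Finset ι) (j : ℕ) :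
    P.real {ω | j + 1 ≤ #{i ∈ s | ω ∈ A i}}
      = 1 - ∑ k ∈ range (j + 1), (#s).choose k * p ^ k * (1 - p) ^ (#s - k) := by
  have hcount := measurable_card_filter_mem hA s
  have hcompl : {ω | j + 1 ≤ #{i ∈ s | ω ∈ A i}}
      = ((fun ω => #{i ∈ s | ω ∈ A i}) ⁻¹' ↑(range (j + 1)))ᶜ := by
    ext ω
    simp
  rw [hcompl, probReal_compl_eq_one_sub (hcount (Finset.measurableSet _)),
    ← sum_measureReal_preimage_singleton _ fun k _ => hcount (measurableSet_singleton k)]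
  exact congrArg _ (sum_congr rfl fun k _ => measureReal_card_filter_mem_eq hA hind hp s k)

end IndependentEvents

theorem tendsto_mul_comp_tsub_of_tendsto_mul {p : ℕ → ℝ} {g : ℝ}
    (hp : Tendsto (fun n => n * p n) atTop (𝓝 g)) (j : ℕ) :
    Tendsto (fun n => n * p (n - j)) atTop (𝓝 g) := by
  have hshift : Tendsto (fun n => n * p n + j * p n) atTop (𝓝 (g + j * 0)) :=
    hp.add ((tendsto_zero_of_tendsto_mul_atTop hp).const_mul (j : ℝ))
  rw [mul_zero, add_zero] at hshift
  refine (hshift.comp (tendsto_sub_atTop_nat j)).congr' ?_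
  filter_upwards [eventually_ge_atTop j] with n hn
  simp only [Function.comp_apply, Nat.cast_sub hn]
  ring

theorem tendsto_sum_choose_add_mul_pow_of_tendsto_mul {p : ℕ → ℝ} {g : ℝ}
    (hp : Tendsto (fun n => n * p n) atTop (𝓝 g)) (j : ℕ) :
    Tendsto (fun r => ∑ k ∈ range (j + 1), (r + j).choose k * p r ^ k * (1 - p r) ^ (r + j - k))
      atTop (𝓝 (∑ k ∈ range (j + 1), Real.exp (-g) * g ^ k / k.factorial)) := by
  have hpoisson := tendsto_finsetSum (range (j + 1)) fun k _ =>
    tendsto_choose_mul_pow_of_tendsto_mul_atTop k (tendsto_mul_comp_tsub_of_tendsto_mul hp j)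
  exact (hpoisson.comp (tendsto_add_atTop_nat j)).congr fun r => by simp

theorem rth_maximum_gamma_limit_general {Ω : Type*} [MeasurableSpace Ω] (P : Measure Ω)
    [IsProbabilityMeasure P] (X : ℕ → Ω → ℝ) (hmeas : ∀ i, Measurable (X i))
    (hindep : iIndepFun X P)
    (F : ℝ → ℝ) (hcdf : ∀ i y, (P {ω | X i ω ≤ y}).toReal = F y)
    (a b : ℕ → ℝ) (ha : ∀ r, 0 < a r) (x : ℝ) (g : ℝ)
    (hlim : Tendsto (fun r : ℕ => (r : ℝ) * F (a r * x - b r)) atTop (𝓝 g))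
    (j : ℕ) :
    Tendsto
      (fun r : ℕ =>
        (P {ω | (kthLargestR (fun i => X i ω) r (r + j) + b r) / a r ≤ x}).toReal)
      atTop
      (𝓝 (1 - ∑ k ∈ Finset.range (j + 1), Real.exp (-g) * g ^ k / (Nat.factorial k))) := by
  have hevents (t : ℝ) : iIndepSet (fun i => {ω | X (i + 1) ω ≤ t}) P :=
    (hindep.iIndepSet_preimage hmeas measurableSet_Iic).precomp Nat.succ_injective
  have hbinomial : ∀ᶠ r in atTop,
      1 - ∑ k ∈ range (j + 1), (r + j).choose k * F (a r * x - b r) ^ k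
          * (1 - F (a r * x - b r)) ^ (r + j - k)
        = (P {ω | (kthLargestR (fun i => X i ω) r (r + j) + b r) / a r ≤ x}).toReal := by
    filter_upwards [eventually_ge_atTop 1] with r hr
    have hset : {ω | (kthLargestR (fun i => X i ω) r (r + j) + b r) / a r ≤ x}
        = {ω | j + 1 ≤ #{i ∈ range (r + j) | ω ∈ {ω | X (i + 1) ω ≤ a r * x - b r}}} := by
      ext ω
      rw [Set.mem_ofPred_eq, div_le_iff₀ (ha r), ← le_sub_iff_add_le, mul_comm,
        kthLargestR_add_le_iff _ hr]
      rfl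
    rw [hset, ← measureReal_def, measureReal_le_card_filter_mem
      (fun i => measurableSet_le (hmeas _) measurable_const) (hevents _) (fun i => hcdf _ _),
      card_range]
  exact (tendsto_const_nhds.sub
    (tendsto_sum_choose_add_mul_pow_of_tendsto_mul hlim j)).congr' hbinomial

/-- Under the domain of attraction condition for minima `r·F(a_r x − b_r) → g_γ(x) > 0`, for
each fixed `j ≥ 0` the normalized `r`-th largest of the first `r + j` observations satisfies
`P[(M_{r+j}^{(r)} + b_r)/a_r ≤ x] → P[Γ_{j+1} ≤ g_γ(x)] = 1 − Σ_{k=0}^{j} e^{−g} g^k/k!`. -/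
theorem rth_maximum_gamma_limit {Ω : Type*} [MeasurableSpace Ω] (P : Measure Ω)
    [IsProbabilityMeasure P] (X : ℕ → Ω → ℝ) (hmeas : ∀ i, Measurable (X i))
    (hindep : iIndepFun X P)
    (F : ℝ → ℝ) (hcdf : ∀ i y, (P {ω | X i ω ≤ y}).toReal = F y) (hF : Continuous F)
    (a b : ℕ → ℝ) (ha : ∀ r, 0 < a r) (x : ℝ) (g : ℝ) (hg : 0 < g)
    (hlim : Tendsto (fun r : ℕ => (r : ℝ) * F (a r * x - b r)) atTop (𝓝 g))
    (j : ℕ) :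
    Tendsto
      (fun r : ℕ =>
        (P {ω | (kthLargestR (fun i => X i ω) r (r + j) + b r) / a r ≤ x}).toReal)
      atTop
      (𝓝 (1 - ∑ k ∈ Finset.range (j + 1), Real.exp (-g) * g ^ k / (Nat.factorial k))) :=
  rth_maximum_gamma_limit_general P X hmeas hindep F hcdf a b ha x g hlim j
end

section
/- If ℛ is the support of the measure associated with R(x) = −log(1−F(x)) and, for each r, ℛ_r is a Poisson random set (point process) on (ℓ_F, r_F) with mean measure r·R such that ℛ_r ⊆ ℛ almost surely, then for every open set G with G ∩ ℛ ≠ ∅ one has P[ℛ_r ∩ G ≠ ∅] = 1 − e^{−r·R(G)} → 1 as r → ∞; consequently ℛ_r converges in the Fell topology on closed sets to the deterministic limit ℛ. -/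
open MeasureTheory Filter Set
open scoped ENNReal Topology

/-! The hitting probability of `G` is the complement of the Poisson avoidance probability
`e^{-r R(G)}`. If `G` meets the support, it contains an open `G'` with `0 < R(G') < ∞`, whose
hitting probability `1 - e^{-r R(G')}` tends to `1`; monotonicity squeezes the hitting
probability of `G` between it and `1`. -/

theorem measure_setOf_inter_nonempty_eq_one_sub {Ω α : Type*} [MeasurableSpace Ω]
    (P : Measure Ω) [IsProbabilityMeasure P] (A : Ω → Set α) (G : Set α)
    (hmeas : MeasurableSet {ω | A ω ∩ G = ∅}) :
    P {ω | (A ω ∩ G).Nonempty} = 1 - P {ω | A ω ∩ G = ∅} := by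
  have hcompl : {ω | (A ω ∩ G).Nonempty} = {ω | A ω ∩ G = ∅}ᶜ := by
    ext ω
    simp [nonempty_iff_ne_empty]
  rw [hcompl, prob_compl_eq_one_sub hmeas]

theorem tendsto_one_sub_ofReal_exp_neg_natCast_mul {c : ℝ} (hc : 0 < c) :
    Tendsto (fun r : ℕ => 1 - ENNReal.ofReal (Real.exp (-((r : ℝ) * c)))) atTop (𝓝 1) := by
  have hexp : Tendsto (fun r : ℕ => Real.exp (-((r : ℝ) * c))) atTop (𝓝 0) :=
    Real.tendsto_exp_atBot.comp <| tendsto_neg_atBot_iff.mpr <|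
      tendsto_natCast_atTop_atTop.atTop_mul_const hc
  have hofReal := ENNReal.tendsto_ofReal hexp
  rw [ENNReal.ofReal_zero] at hofReal
  simpa using ENNReal.Tendsto.sub tendsto_const_nhds hofReal (Or.inl ENNReal.one_ne_top)

theorem exists_isOpen_subset_measure_pos_lt_top {X : Type*} [TopologicalSpace X]
    [MeasurableSpace X] (μ : Measure X) [IsLocallyFiniteMeasure μ] {G : Set X} {x : X}
    (hG : IsOpen G) (hxG : x ∈ G) (hx : ∀ U : Set X, IsOpen U → x ∈ U → 0 < μ U) :
    ∃ G' ⊆ G, IsOpen G' ∧ 0 < μ G' ∧ μ G' < ⊤ := by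
  obtain ⟨U, hxU, hU, hUfin⟩ := μ.exists_isOpen_measure_lt_top x
  exact ⟨G ∩ U, inter_subset_left, hG.inter hU, hx _ (hG.inter hU) ⟨hxG, hxU⟩,
    (measure_mono inter_subset_right).trans_lt hUfin⟩

theorem range_converges_to_support_general {Ω : Type*} [MeasurableSpace Ω] (P : Measure Ω)
    [IsProbabilityMeasure P] (R : Measure ℝ) [IsLocallyFiniteMeasure R]
    (supp : Set ℝ) (hsupp : supp = {x : ℝ | ∀ U : Set ℝ, IsOpen U → x ∈ U → 0 < R U})
    (A : ℕ → Ω → Set ℝ)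
    (hmeasA : ∀ (r : ℕ) (G : Set ℝ), IsOpen G → MeasurableSet {ω | A r ω ∩ G = ∅})
    (hvoid : ∀ (r : ℕ) (G : Set ℝ), IsOpen G → R G ≠ ⊤ →
      P {ω | A r ω ∩ G = ∅} = ENNReal.ofReal (Real.exp (-((r : ℝ) * (R G).toReal)))) :
    (∀ (r : ℕ) (G : Set ℝ), IsOpen G → R G ≠ ⊤ →
      P {ω | (A r ω ∩ G).Nonempty} =
        1 - ENNReal.ofReal (Real.exp (-((r : ℝ) * (R G).toReal)))) ∧
    (∀ G : Set ℝ, IsOpen G → (G ∩ supp).Nonempty →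
      Tendsto (fun r : ℕ => P {ω | (A r ω ∩ G).Nonempty}) atTop (𝓝 1)) := by
  have hhit : ∀ (r : ℕ) (G : Set ℝ), IsOpen G → R G ≠ ⊤ →
      P {ω | (A r ω ∩ G).Nonempty} =
        1 - ENNReal.ofReal (Real.exp (-((r : ℝ) * (R G).toReal))) := fun r G hG hfin => by
    rw [measure_setOf_inter_nonempty_eq_one_sub P (A r) G (hmeasA r G hG), hvoid r G hG hfin]
  refine ⟨hhit, fun G hG ⟨x, hxG, hx⟩ => ?_⟩
  rw [hsupp] at hx
  obtain ⟨G', hG'G, hG', hpos, hfin⟩ := exists_isOpen_subset_measure_pos_lt_top R hG hxG hx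
  have hlow : Tendsto (fun r : ℕ => P {ω | (A r ω ∩ G').Nonempty}) atTop (𝓝 1) := by
    simp only [hhit _ G' hG' hfin.ne]
    exact tendsto_one_sub_ofReal_exp_neg_natCast_mul (ENNReal.toReal_pos hpos.ne' hfin.ne)
  refine tendsto_of_tendsto_of_tendsto_of_le_of_le hlow tendsto_const_nhds
    (fun r => measure_mono fun ω => ?_) (fun r => prob_le_one)
  exact Nonempty.mono (inter_subset_inter_right _ hG'G)

/-- If `ℛ` is the support of the measure `R` (associated with `R(x) = −log(1−F(x))`) and, for
each `r`, `ℛ_r` is a Poisson random closed set with mean measure `r·R` contained in `ℛ`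
(so that the avoidance probability of an open `G` is `e^{−r·R(G)}`), then for every open `G`
meeting `ℛ` one has `P[ℛ_r ∩ G ≠ ∅] = 1 − e^{−r·R(G)} → 1` as `r → ∞`; by the reduction of
Fell convergence to hitting probabilities, `ℛ_r` converges to the deterministic limit `ℛ`. -/
theorem range_converges_to_support {Ω : Type*} [MeasurableSpace Ω] (P : Measure Ω)
    [IsProbabilityMeasure P] (R : Measure ℝ) [IsLocallyFiniteMeasure R]
    (supp : Set ℝ) (hsupp : supp = {x : ℝ | ∀ U : Set ℝ, IsOpen U → x ∈ U → 0 < R U})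
    (A : ℕ → Ω → Set ℝ) (hsub : ∀ r ω, A r ω ⊆ supp)
    (hmeasA : ∀ (r : ℕ) (G : Set ℝ), IsOpen G → MeasurableSet {ω | A r ω ∩ G = ∅})
    (hvoid : ∀ (r : ℕ) (G : Set ℝ), IsOpen G → R G ≠ ⊤ →
      P {ω | A r ω ∩ G = ∅} = ENNReal.ofReal (Real.exp (-((r : ℝ) * (R G).toReal)))) :
    (∀ (r : ℕ) (G : Set ℝ), IsOpen G → R G ≠ ⊤ →
      P {ω | (A r ω ∩ G).Nonempty} =
        1 - ENNReal.ofReal (Real.exp (-((r : ℝ) * (R G).toReal)))) ∧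
    (∀ G : Set ℝ, IsOpen G → (G ∩ supp).Nonempty →
      Tendsto (fun r : ℕ => P {ω | (A r ω ∩ G).Nonempty}) atTop (𝓝 1)) :=
  range_converges_to_support_general P R supp hsupp A hmeasA hvoid
end
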